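/- arXiv:2506.00712 — 2 statements merged into one kernel-verified Lean document; each statement's English description precedes it below -/
import Mathlib

section
/- Let μ_k be the uniform probability measure on the k-th generation of the s-parabolic Cantor set. For any s-parabolic cube R ⊂ ℝ^{n+1}, the function P^s_{μ_k} χ_R(x̄) = ∫_R ∇_x P_s(x̄ − ȳ) dμ_k(ȳ) satisfies ∫_R P^s_{μ_k} χ_R dμ_k = 0. -/
open MeasureTheory Set
open scoped ENNReal

noncomputable section

section AuxLemmas

variable {α β γ δ : Type*} [MeasurableSpace α] [MeasurableSpace β]
  [MeasurableSpace γ] [MeasurableSpace δ]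

/-- Measurable equiv version of `Equiv.prodProdProdComm`. -/
def mePPPC (α β γ δ : Type*) [MeasurableSpace α] [MeasurableSpace β]
    [MeasurableSpace γ] [MeasurableSpace δ] : (α × β) × γ × δ ≃ᵐ (α × γ) × β × δ where
  toEquiv := Equiv.prodProdProdComm α β γ δ
  measurable_toFun := by
    show Measurable fun p : (α × β) × γ × δ => ((p.1.1, p.2.1), (p.1.2, p.2.2))
    exact ((measurable_fst.fst.prodMk measurable_snd.fst).prodMk
      (measurable_fst.snd.prodMk measurable_snd.snd))
  measurable_invFun := by
    show Measurable fun p : (α × γ) × β × δ => ((p.1.1, p.2.1), (p.1.2, p.2.2))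
    exact ((measurable_fst.fst.prodMk measurable_snd.fst).prodMk
      (measurable_fst.snd.prodMk measurable_snd.snd))

theorem measurePreserving_mePPPC (μa : Measure α) (μb : Measure β) (μc : Measure γ)
    (μd : Measure δ) [SFinite μa] [SFinite μb] [SFinite μc] [SFinite μd] :
    MeasurePreserving (mePPPC α β γ δ) ((μa.prod μb).prod (μc.prod μd))
      ((μa.prod μc).prod (μb.prod μd)) := by
  have h1 := (measurePreserving_prodAssoc (μa.prod μb) μc μd).symm
    (MeasurableEquiv.prodAssoc : ((α × β) × γ) × δ ≃ᵐ (α × β) × γ × δ)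
  have h2 := (measurePreserving_prodAssoc μa μb μc).prod (MeasurePreserving.id μd)
  have h3 := ((MeasurePreserving.id μa).prod
      (Measure.measurePreserving_swap (μ := μb) (ν := μc))).prod (MeasurePreserving.id μd)
  have h4 := ((measurePreserving_prodAssoc μa μc μb).symm
    (MeasurableEquiv.prodAssoc : (α × γ) × β ≃ᵐ α × γ × β)).prod (MeasurePreserving.id μd)
  have h5 := measurePreserving_prodAssoc (μa.prod μc) μb μd
  have H := (h5.comp (h4.comp (h3.comp (h2.comp h1))))
  have heq : (⇑MeasurableEquiv.prodAssoc ∘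
      (Prod.map (⇑(MeasurableEquiv.prodAssoc :
          (α × γ) × β ≃ᵐ α × γ × β).symm) id ∘
        (Prod.map (Prod.map id Prod.swap) id ∘
          (Prod.map (⇑(MeasurableEquiv.prodAssoc : (α × β) × γ ≃ᵐ α × β × γ)) id ∘
            ⇑(MeasurableEquiv.prodAssoc :
              ((α × β) × γ) × δ ≃ᵐ (α × β) × γ × δ).symm)))) = ⇑(mePPPC α β γ δ) := by
    funext p
    rfl
  rw [heq] at H
  exact H

theorem smul_prod_left' (c : ℝ≥0∞) (μ : Measure α) (ν : Measure β) [SFinite ν] :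
    (c • μ).prod ν = c • μ.prod ν := by
  ext s hs
  rw [Measure.prod_apply hs, Measure.smul_apply, Measure.prod_apply hs,
    lintegral_smul_measure, smul_eq_mul]

theorem smul_prod_right' (c : ℝ≥0∞) (μ : Measure α) (ν : Measure β) [SFinite ν] :
    μ.prod (c • ν) = c • μ.prod ν := by
  ext s hs
  rw [Measure.prod_apply hs, Measure.smul_apply, Measure.prod_apply hs, smul_eq_mul,
    ← lintegral_const_mul c (measurable_measure_prodMk_left hs)]
  simp

end AuxLemmas

/-- The closed `s`-parabolic cube in `ℝⁿ × ℝ` with corner `c` and side length `h`. -/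
def parCube (n : ℕ) (s : ℝ) (c : (Fin n → ℝ) × ℝ) (h : ℝ) : Set ((Fin n → ℝ) × ℝ) :=
  {z | (∀ i, c.1 i ≤ z.1 i ∧ z.1 i ≤ c.1 i + h) ∧ c.2 ≤ z.2 ∧ z.2 ≤ c.2 + h ^ (2 * s)}

/-- Let `μ_k` be the uniform probability measure `|E_k|⁻¹ ⋅ Leb|_{E_k}` on the `k`-th
generation `E_k` of the `s`-parabolic Cantor set, and let `F = ∇_x P_s` be the (spatial
gradient of the) fractional heat kernel, which is anti-symmetric in the spatial variable:
`F(-x,t) = -F(x,t)`.  For any `s`-parabolic cube `R`, using that `R ∩ E_k` is a cartesian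
product `X ×ˢ T`, the potential `𝒫^s_{μ_k}χ_R(z) = ∫_R F(z - w) dμ_k(w)` satisfies
`∫_R 𝒫^s_{μ_k}χ_R dμ_k = 0`. -/
theorem stmt_3 (n : ℕ) (s : ℝ) (hs : 1 / 2 < s) (hs1 : s ≤ 1)
    (F : ((Fin n → ℝ) × ℝ) → (Fin n → ℝ)) (hFmeas : Measurable F)
    (hF : ∀ (x : Fin n → ℝ) (t : ℝ), F (-x, t) = -F (x, t))
    (E : Set ((Fin n → ℝ) × ℝ)) (hE : MeasurableSet E)
    (corner : (Fin n → ℝ) × ℝ) (h : ℝ) (hh : 0 < h)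
    (R : Set ((Fin n → ℝ) × ℝ)) (hR : R = parCube n s corner h)
    (X : Set (Fin n → ℝ)) (T : Set ℝ) (hX : MeasurableSet X) (hT : MeasurableSet T)
    (hRE : R ∩ E = X ×ˢ T)
    (μk : Measure ((Fin n → ℝ) × ℝ)) (hμk : μk = (volume E)⁻¹ • volume.restrict E)
    (hInt : Integrable
      (fun p : ((Fin n → ℝ) × ℝ) × ((Fin n → ℝ) × ℝ) => F (p.1 - p.2)) (μk.prod μk)) :
    ∫ z in R, (∫ w in R, F (z - w) ∂μk) ∂μk = 0 := by
  -- measurability of the parabolic cube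
  have hRmeas : MeasurableSet R := by
    rw [hR]
    have hcube : parCube n s corner h =
        (Set.pi Set.univ fun i => Icc (corner.1 i) (corner.1 i + h)) ×ˢ
          Icc corner.2 (corner.2 + h ^ (2 * s)) := by
      ext z
      simp [parCube, Set.mem_pi, Prod.le_def, Pi.le_def, forall_and]
      tauto
    rw [hcube]
    exact (MeasurableSet.univ_pi fun i => measurableSet_Icc).prod measurableSet_Icc
  haveI : SFinite μk := by rw [hμk]; infer_instance
  -- the restricted measure is a product measure (up to normalization)
  have hres : μk.restrict R =
      (volume E)⁻¹ • ((volume.restrict X).prod (volume.restrict T)) := by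
    rw [hμk, Measure.restrict_smul, Measure.restrict_restrict hRmeas, hRE,
      Measure.prod_restrict, ← Measure.volume_eq_prod]
  set π : Measure ((Fin n → ℝ) × ℝ) := (volume.restrict X).prod (volume.restrict T) with hπ
  simp only [hres, integral_smul_measure]
  rw [integral_smul]
  by_cases hdeg : ((volume E)⁻¹).toReal = 0
  · rw [hdeg]; simp
  -- nondegenerate case
  have hne : (volume E)⁻¹ ≠ 0 := by
    intro h0; rw [h0] at hdeg; simp at hdeg
  have hnetop : (volume E)⁻¹ ≠ ∞ := by
    intro h0; rw [h0] at hdeg; simp at hdeg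
  suffices hK : ∫ z, (∫ w, F (z - w) ∂π) ∂π = 0 by
    rw [hK]; simp
  -- transfer integrability to π.prod π
  have hIntπ : Integrable
      (fun p : ((Fin n → ℝ) × ℝ) × ((Fin n → ℝ) × ℝ) => F (p.1 - p.2)) (π.prod π) := by
    have h1 := hInt.restrict (s := R ×ˢ R)
    rw [← Measure.prod_restrict, hres, smul_prod_left', smul_prod_right', smul_smul] at h1
    exact (integrable_smul_measure (mul_ne_zero hne hne)
      (ENNReal.mul_ne_top hnetop hnetop)).mp h1
  rw [integral_integral hIntπ]
  -- the measure preserving swap of the two spatial coordinates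
  set e : ((Fin n → ℝ) × ℝ) × ((Fin n → ℝ) × ℝ) ≃ᵐ ((Fin n → ℝ) × ℝ) × ((Fin n → ℝ) × ℝ) :=
    (mePPPC (Fin n → ℝ) ℝ (Fin n → ℝ) ℝ).trans
      ((MeasurableEquiv.prodComm.prodCongr (MeasurableEquiv.refl (ℝ × ℝ))).trans
        (mePPPC (Fin n → ℝ) ℝ (Fin n → ℝ) ℝ).symm) with he
  have hmid : MeasurePreserving
      (MeasurableEquiv.prodComm.prodCongr (MeasurableEquiv.refl (ℝ × ℝ)))
      (((volume.restrict X).prod (volume.restrict X)).prod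
        ((volume.restrict T).prod (volume.restrict T)))
      (((volume.restrict X).prod (volume.restrict X)).prod
        ((volume.restrict T).prod (volume.restrict T))) :=
    (Measure.measurePreserving_swap
        (μ := volume.restrict X) (ν := volume.restrict X)).prod
      (MeasurePreserving.id ((volume.restrict T).prod (volume.restrict T)))
  have hmp : MeasurePreserving e (π.prod π) (π.prod π) := by
    have hp := measurePreserving_mePPPC (volume.restrict X) (volume.restrict T)
      (volume.restrict X) (volume.restrict T)
    have hq := hp.symm (mePPPC (Fin n → ℝ) ℝ (Fin n → ℝ) ℝ)
    have H := hq.comp (hmid.comp hp)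
    have heq : (⇑(mePPPC (Fin n → ℝ) ℝ (Fin n → ℝ) ℝ).symm ∘
        (⇑(MeasurableEquiv.prodComm.prodCongr (MeasurableEquiv.refl (ℝ × ℝ))) ∘
          ⇑(mePPPC (Fin n → ℝ) ℝ (Fin n → ℝ) ℝ))) = ⇑e := by
      funext p
      rfl
    rw [heq] at H
    exact H
  have hcomp := hmp.integral_comp e.measurableEmbedding
    (fun p : ((Fin n → ℝ) × ℝ) × ((Fin n → ℝ) × ℝ) => F (p.1 - p.2))
  have hptwise : ∀ p : ((Fin n → ℝ) × ℝ) × ((Fin n → ℝ) × ℝ),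
      F ((e p).1 - (e p).2) = -F (p.1 - p.2) := by
    intro p
    have h1 : (e p).1 - (e p).2 = (p.2.1 - p.1.1, p.1.2 - p.2.2) := rfl
    have h2 : p.1 - p.2 = (p.1.1 - p.2.1, p.1.2 - p.2.2) := rfl
    rw [h1, h2, ← neg_sub p.1.1 p.2.1]
    exact hF (p.1.1 - p.2.1) (p.1.2 - p.2.2)
  have hneg : (∫ p : ((Fin n → ℝ) × ℝ) × ((Fin n → ℝ) × ℝ), F (p.1 - p.2) ∂(π.prod π))
      = -(∫ p : ((Fin n → ℝ) × ℝ) × ((Fin n → ℝ) × ℝ), F (p.1 - p.2) ∂(π.prod π)) := by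
    conv_lhs => rw [← hcomp]
    simp_rw [hptwise]
    rw [integral_neg]
  have hII : (∫ p : ((Fin n → ℝ) × ℝ) × ((Fin n → ℝ) × ℝ), F (p.1 - p.2) ∂(π.prod π))
      + (∫ p : ((Fin n → ℝ) × ℝ) × ((Fin n → ℝ) × ℝ), F (p.1 - p.2) ∂(π.prod π)) = 0 := by
    nth_rewrite 1 [hneg]
    exact neg_add_cancel _
  have h2I : (2 : ℝ) • (∫ p : ((Fin n → ℝ) × ℝ) × ((Fin n → ℝ) × ℝ),
      F (p.1 - p.2) ∂(π.prod π)) = 0 := by rw [two_smul]; exact hII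
  exact (smul_eq_zero.mp h2I).resolve_left two_ne_zero
end
end

section
/- With the stopping intervals I_j as above, define σ(A) := Σ_{j ∈ A∩ℤ} θ_j², call a scale j ∈ {0,…,k−1} good if p_j := Σ_{i=0}^{j} θ_i (ℓ_j/ℓ_i) ≤ 40 θ_j and bad otherwise, and call an interval I_j good if σ(I_j ∩ 𝒢) ≥ σ(I_j)/400. If Σ_{j=0}^{k−1} p_j² ≤ 4 σ([0,k−1]), then σ(𝓑) ≤ σ([0,k−1])/400 and consequently σ([0,k−1]) ≤ (399/398) Σ_{I_j good} σ(I_j). -/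
open Finset

private lemma sq_le_aux (sq : ℕ → ℕ) (m : ℕ) (hinc : ∀ j < m, sq j < sq (j + 1)) :
    sq 0 ≤ sq m := by
  induction m with
  | zero => exact le_rfl
  | succ n ih =>
    exact le_trans (ih fun j hj => hinc j (Nat.lt_succ_of_lt hj))
      (hinc n (Nat.lt_succ_self n)).le

private lemma partition_sum (f : ℕ → ℝ) (sq : ℕ → ℕ) (m : ℕ)
    (hinc : ∀ j < m, sq j < sq (j + 1)) :
    ∑ j ∈ range m, ∑ i ∈ Ico (sq j) (sq (j + 1)), f i
      = ∑ i ∈ Ico (sq 0) (sq m), f i := by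
  induction m with
  | zero => simp
  | succ n ih =>
    rw [sum_range_succ, ih (fun j hj => hinc j (Nat.lt_succ_of_lt hj))]
    exact sum_Ico_consecutive f (sq_le_aux sq n fun j hj => hinc j (Nat.lt_succ_of_lt hj))
      (hinc n (Nat.lt_succ_self n)).le

/-- Good and bad scales/intervals: with the stopping intervals `I_j = [s_j, s_{j+1})`
partitioning `[0, k-1]`, `σ(A) = Σ_{i ∈ A} θ_i²`, a scale `j` *good* when
`p_j = Σ_{i=0}^{j} θ_i (ℓ_j/ℓ_i) ≤ 40 θ_j` (bad otherwise), and an interval `I_j` *good*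
when `σ(I_j ∩ 𝒢) ≥ σ(I_j)/400`: if `Σ_{j<k} p_j² ≤ 4 σ([0,k-1])`, then
`σ(𝓑) ≤ σ([0,k-1])/400` and `σ([0,k-1]) ≤ (399/398) Σ_{I_j good} σ(I_j)`. -/
theorem stmt_16 (k m : ℕ) (θ ℓ : ℕ → ℝ) (hθ : ∀ i, 0 < θ i)
    (sq : ℕ → ℕ) (h0 : sq 0 = 0) (hm : sq m = k)
    (hinc : ∀ j < m, sq j < sq (j + 1))
    (p : ℕ → ℝ) (hp : ∀ j, p j = ∑ r ∈ Finset.range (j + 1), θ r * (ℓ j / ℓ r))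
    (σ : Finset ℕ → ℝ) (hσ : ∀ A, σ A = ∑ i ∈ A, θ i ^ 2)
    (hsum : ∑ j ∈ Finset.range k, p j ^ 2 ≤ 4 * σ (Finset.range k)) :
    σ ((Finset.range k).filter fun j => ¬ p j ≤ 40 * θ j) ≤ σ (Finset.range k) / 400 ∧
    σ (Finset.range k) ≤ (399 / 398) *
      ∑ j ∈ (Finset.range m).filter fun j =>
          σ (Finset.Ico (sq j) (sq (j + 1))) / 400 ≤
            σ ((Finset.Ico (sq j) (sq (j + 1))).filter fun i => p i ≤ 40 * θ i),
        σ (Finset.Ico (sq j) (sq (j + 1))) := by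
  have hS0 : (0:ℝ) ≤ σ (range k) := by
    rw [hσ]; exact sum_nonneg fun i _ => sq_nonneg _
  -- Part 1: σ(bad scales) ≤ σ(range k)/400
  have hB : σ ((range k).filter fun j => ¬ p j ≤ 40 * θ j) ≤ σ (range k) / 400 := by
    rw [hσ]
    have step1 : ∑ i ∈ (range k).filter (fun j => ¬ p j ≤ 40 * θ j), θ i ^ 2
        ≤ ∑ i ∈ (range k).filter (fun j => ¬ p j ≤ 40 * θ j), p i ^ 2 / 1600 := by
      refine sum_le_sum fun i hi => ?_
      have h40 : 40 * θ i ≤ p i := le_of_not_ge (mem_filter.mp hi).2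
      nlinarith [hθ i]
    have step2 : ∑ i ∈ (range k).filter (fun j => ¬ p j ≤ 40 * θ j), p i ^ 2 / 1600
        ≤ ∑ i ∈ range k, p i ^ 2 / 1600 :=
      sum_le_sum_of_subset_of_nonneg (filter_subset _ _) (fun i _ _ => by positivity)
    rw [← sum_div, ← sum_div] at step2
    rw [← sum_div] at step1
    linarith
  refine ⟨hB, ?_⟩
  -- Part 2
  set P : ℕ → Prop := fun j =>
      σ (Finset.Ico (sq j) (sq (j + 1))) / 400 ≤
        σ ((Finset.Ico (sq j) (sq (j + 1))).filter fun i => p i ≤ 40 * θ i) with hP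
  -- sum of interval σ's equals total
  have htot : ∑ j ∈ range m, σ (Ico (sq j) (sq (j + 1))) = σ (range k) := by
    simp only [hσ]
    have := partition_sum (fun i => θ i ^ 2) sq m hinc
    rw [h0, hm] at this
    rw [this, Finset.range_eq_Ico]
  -- sum of σ(I_j ∩ bad) equals σ(bad)
  have hbadtot : ∑ j ∈ range m, σ ((Ico (sq j) (sq (j + 1))).filter fun i => ¬ p i ≤ 40 * θ i)
      = σ ((range k).filter fun j => ¬ p j ≤ 40 * θ j) := by
    simp only [hσ, sum_filter]
    have := partition_sum (fun i => if ¬ p i ≤ 40 * θ i then θ i ^ 2 else 0) sq m hinc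
    rw [h0, hm] at this
    rw [this, Finset.range_eq_Ico]
  -- split range m into good/bad intervals
  have hsplit : ∑ j ∈ (range m).filter P, σ (Ico (sq j) (sq (j + 1)))
      + ∑ j ∈ (range m).filter (fun j => ¬ P j), σ (Ico (sq j) (sq (j + 1)))
      = σ (range k) := by
    rw [sum_filter_add_sum_filter_not, htot]
  -- each bad interval: σ(I_j) ≤ (400/399) σ(I_j ∩ bad)
  have hbadint : ∀ j, ¬ P j →
      σ (Ico (sq j) (sq (j + 1))) ≤
        (400/399) * σ ((Ico (sq j) (sq (j + 1))).filter fun i => ¬ p i ≤ 40 * θ i) := by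
    intro j hj
    have hdecomp : σ ((Ico (sq j) (sq (j + 1))).filter fun i => p i ≤ 40 * θ i)
        + σ ((Ico (sq j) (sq (j + 1))).filter fun i => ¬ p i ≤ 40 * θ i)
        = σ (Ico (sq j) (sq (j + 1))) := by
      simp only [hσ]
      exact sum_filter_add_sum_filter_not _ _ _
    have hlt : σ ((Ico (sq j) (sq (j + 1))).filter fun i => p i ≤ 40 * θ i)
        < σ (Ico (sq j) (sq (j + 1))) / 400 := lt_of_not_ge hj
    linarith
  -- sum over bad intervals of σ(I_j) bounded
  have hBsum : ∑ j ∈ (range m).filter (fun j => ¬ P j), σ (Ico (sq j) (sq (j + 1)))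
      ≤ (400/399) * (σ (range k) / 400) := by
    calc ∑ j ∈ (range m).filter (fun j => ¬ P j), σ (Ico (sq j) (sq (j + 1)))
        ≤ ∑ j ∈ (range m).filter (fun j => ¬ P j),
            (400/399) * σ ((Ico (sq j) (sq (j + 1))).filter fun i => ¬ p i ≤ 40 * θ i) :=
          sum_le_sum fun j hj => hbadint j (mem_filter.mp hj).2
      _ = (400/399) * ∑ j ∈ (range m).filter (fun j => ¬ P j),
            σ ((Ico (sq j) (sq (j + 1))).filter fun i => ¬ p i ≤ 40 * θ i) := by
          rw [mul_sum]
      _ ≤ (400/399) * ∑ j ∈ range m,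
            σ ((Ico (sq j) (sq (j + 1))).filter fun i => ¬ p i ≤ 40 * θ i) := by
          apply mul_le_mul_of_nonneg_left _ (by norm_num)
          apply sum_le_sum_of_subset_of_nonneg (filter_subset _ _)
          intro i _ _
          rw [hσ]
          exact sum_nonneg fun _ _ => sq_nonneg _
      _ = (400/399) * σ ((range k).filter fun j => ¬ p j ≤ 40 * θ j) := by rw [hbadtot]
      _ ≤ (400/399) * (σ (range k) / 400) := by
          apply mul_le_mul_of_nonneg_left hB (by norm_num)
  linarith
end
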